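/- arXiv:1005.2724 — 2 statements merged into one kernel-verified Lean document; each statement's English description precedes it below -/
import Mathlib

section
/- Let R be a linear map from ℝⁿ to ℝᵗ and let 0 < ε < 1. Suppose that for all v in a linear subspace V of ℝⁿ, (1−ε)‖v‖² ≤ ‖Rv‖² ≤ (1+ε)‖v‖². Then for all v₁, v₂ ∈ V, |⟨Rv₁, Rv₂⟩ − ⟨v₁, v₂⟩| ≤ ε‖v₁‖‖v₂‖. -/
/-!
Polarization: `4⟪Ra, Rb⟫ = ‖R(a+b)‖² − ‖R(a−b)‖²`, and the same without `R`, so the hypothesis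
applied to `a ± b` bounds the error by `ε(‖a‖² + ‖b‖²)/2`. Applying this to `‖b‖ • a` and `‖a‖ • b`,
which have equal norms, turns the arithmetic mean into the geometric one, `ε‖a‖‖b‖`.
-/

open scoped RealInnerProductSpace

variable {E F : Type*} [NormedAddCommGroup E] [InnerProductSpace ℝ E]
  [NormedAddCommGroup F] [InnerProductSpace ℝ F]

def IsSubspaceEmbedding (ε : ℝ) (f : E →ₗ[ℝ] F) (V : Submodule ℝ E) : Prop :=
  ∀ v ∈ V, (1 - ε) * ‖v‖ ^ 2 ≤ ‖f v‖ ^ 2 ∧ ‖f v‖ ^ 2 ≤ (1 + ε) * ‖v‖ ^ 2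

namespace IsSubspaceEmbedding

variable {ε : ℝ} {f : E →ₗ[ℝ] F} {V : Submodule ℝ E}

theorem abs_inner_sub_le_mean_sq (hf : IsSubspaceEmbedding ε f V) {a b : E}
    (ha : a ∈ V) (hb : b ∈ V) :
    |⟪f a, f b⟫ - ⟪a, b⟫| ≤ ε * (‖a‖ ^ 2 + ‖b‖ ^ 2) / 2 := by
  obtain ⟨hadd_lo, hadd_hi⟩ := hf (a + b) (V.add_mem ha hb)
  obtain ⟨hsub_lo, hsub_hi⟩ := hf (a - b) (V.sub_mem ha hb)
  rw [map_add, norm_add_sq_real, norm_add_sq_real] at hadd_lo hadd_hi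
  rw [map_sub, norm_sub_sq_real, norm_sub_sq_real] at hsub_lo hsub_hi
  rw [abs_le]
  constructor <;> linarith

theorem abs_inner_sub_le (hf : IsSubspaceEmbedding ε f V) {a b : E}
    (ha : a ∈ V) (hb : b ∈ V) :
    |⟪f a, f b⟫ - ⟪a, b⟫| ≤ ε * ‖a‖ * ‖b‖ := by
  rcases eq_or_ne a 0 with rfl | ha0
  · simp
  rcases eq_or_ne b 0 with rfl | hb0
  · simp
  have hab : 0 < ‖a‖ * ‖b‖ := mul_pos (norm_pos_iff.mpr ha0) (norm_pos_iff.mpr hb0)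
  have hscaled := hf.abs_inner_sub_le_mean_sq (V.smul_mem ‖b‖ ha) (V.smul_mem ‖a‖ hb)
  simp only [map_smul, real_inner_smul_left, real_inner_smul_right, norm_smul, norm_norm]
    at hscaled
  refine le_of_mul_le_mul_left ?_ hab
  calc ‖a‖ * ‖b‖ * |⟪f a, f b⟫ - ⟪a, b⟫|
      = |‖a‖ * (‖b‖ * ⟪f a, f b⟫) - ‖a‖ * (‖b‖ * ⟪a, b⟫)| := by
        rw [← abs_of_pos hab, ← abs_mul]; ring_nf
    _ ≤ ε * ((‖b‖ * ‖a‖) ^ 2 + (‖a‖ * ‖b‖) ^ 2) / 2 := hscaled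
    _ = ‖a‖ * ‖b‖ * (ε * ‖a‖ * ‖b‖) := by ring

end IsSubspaceEmbedding

theorem inner_product_preservation_general {n t : ℕ} (ε : ℝ)
    (R : EuclideanSpace ℝ (Fin n) →ₗ[ℝ] EuclideanSpace ℝ (Fin t))
    (V : Submodule ℝ (EuclideanSpace ℝ (Fin n)))
    (h : ∀ v ∈ V, (1 - ε) * ‖v‖ ^ 2 ≤ ‖R v‖ ^ 2 ∧ ‖R v‖ ^ 2 ≤ (1 + ε) * ‖v‖ ^ 2) :
    ∀ v₁ ∈ V, ∀ v₂ ∈ V,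
      |(inner ℝ (R v₁) (R v₂) : ℝ) - (inner ℝ v₁ v₂ : ℝ)| ≤ ε * ‖v₁‖ * ‖v₂‖ :=
  fun _ h₁ _ h₂ => IsSubspaceEmbedding.abs_inner_sub_le h h₁ h₂

/-- If a linear map `R : ℝⁿ → ℝᵗ` satisfies
`(1−ε)‖v‖² ≤ ‖Rv‖² ≤ (1+ε)‖v‖²` for all `v` in a subspace `V`, then for all `v₁, v₂ ∈ V`,
`|⟨Rv₁, Rv₂⟩ − ⟨v₁, v₂⟩| ≤ ε‖v₁‖‖v₂‖`. -/
theorem inner_product_preservation {n t : ℕ} (ε : ℝ) (hε0 : 0 < ε) (hε1 : ε < 1)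
    (R : EuclideanSpace ℝ (Fin n) →ₗ[ℝ] EuclideanSpace ℝ (Fin t))
    (V : Submodule ℝ (EuclideanSpace ℝ (Fin n)))
    (h : ∀ v ∈ V, (1 - ε) * ‖v‖ ^ 2 ≤ ‖R v‖ ^ 2 ∧ ‖R v‖ ^ 2 ≤ (1 + ε) * ‖v‖ ^ 2) :
    ∀ v₁ ∈ V, ∀ v₂ ∈ V,
      |(inner ℝ (R v₁) (R v₂) : ℝ) - (inner ℝ v₁ v₂ : ℝ)| ≤ ε * ‖v₁‖ * ‖v₂‖ :=
  inner_product_preservation_general ε R V h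
end

section
/- Let A be a real n×m matrix of rank r, with A = A_k + U_{r−k}Σ_{r−k}V_{r−k}ᵀ the splitting into the top-k SVD part and the tail, and set H_k = U_{r−k}Σ_{r−k}. Let R be any t×n real matrix such that R·U_k has full column rank, where U_k is the matrix of top-k left singular vectors of A. Then ‖A − P_{(RA),k}(A)‖ ≤ 2‖A − A_k‖ + ‖(RU_k)⁺ R H_k‖, where ‖·‖ is the spectral norm, C⁺ the Moore–Penrose pseudoinverse, and P_{(RA),k}(A) the best rank-k approximation of A(RA)⁺(RA). -/
open Matrix

/-- The spectral (operator) norm of a real matrix. -/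
noncomputable def specNorm {m n : Type*} [Fintype m] [Fintype n] [DecidableEq n]
    (A : Matrix m n ℝ) : ℝ :=
  ‖LinearMap.toContinuousLinearMap (Matrix.toEuclideanLin A)‖

/-- The Moore–Penrose pseudoinverse of a real matrix, characterized by the four
Penrose equations. -/
noncomputable def pinv {a b : Type*} [Fintype a] [Fintype b]
    (A : Matrix a b ℝ) : Matrix b a ℝ :=
  Classical.epsilon fun B =>
    A * B * A = A ∧ B * A * B = B ∧ (A * B)ᵀ = A * B ∧ (B * A)ᵀ = B * A

/-- A best rank-\`k\` approximation (in spectral norm) of a matrix. -/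
noncomputable def bestRankApprox {a b : Type*} [Fintype a] [Fintype b] [DecidableEq b]
    (k : ℕ) (A : Matrix a b ℝ) : Matrix a b ℝ :=
  Classical.epsilon fun B => B.rank ≤ k ∧
    ∀ C : Matrix a b ℝ, C.rank ≤ k → specNorm (A - B) ≤ specNorm (A - C)

/-!
`P = (RA)⁺(RA)` is the orthogonal projection onto the row space of `RA`, and the approximant is
the best rank-`k` approximation `(AP)ₖ` of `AP`. For any `X` with `XP = X` and any `Y` of rank at
most `k`, `A - (AP)ₖ = (A - X)(1 - P) + (AP - (AP)ₖ)` and `‖AP - (AP)ₖ‖ ≤ ‖(A - Y)P‖`, so the error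
is at most `‖A - X‖ + ‖A - Y‖`. Take `Y = Aₖ` and `X = Uₖ(RUₖ)⁺RA`, whose rows lie in the row space
of `RA`: since `(RUₖ)⁺RUₖ = 1`, `A - X = (A - Aₖ) - Uₖ(RUₖ)⁺RHₖV_{r-k}ᵀ`.

The pseudoinverse exists as `(AᵀA)⁺Aᵀ`, where `(AᵀA)⁺` inverts the nonzero eigenvalues of `AᵀA`;
a best rank-`k` approximation exists because the matrices of rank at most `k` form a closed set.
-/

theorem Matrix.eq_zero_of_rank_eq_zero {m n : Type*} [Fintype n] {M : Matrix m n ℝ}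
    (h : M.rank = 0) : M = 0 := by
  classical
  rw [Matrix.rank, Submodule.finrank_eq_zero, LinearMap.range_eq_bot, ← toLin'_apply'] at h
  exact Matrix.toLin'.map_eq_zero_iff.mp h

section Pseudoinverse

variable {l m n : Type*} [Fintype m] [Fintype n]

theorem Matrix.mul_eq_self_of_gram_mul_eq {A : Matrix m n ℝ} {S : Matrix n n ℝ}
    (h : Aᵀ * A * S = Aᵀ * A) : A * S = A := by
  have hgram : (A - A * S)ᴴ * (A - A * S) = 0 := by
    rw [conjTranspose_eq_transpose_of_trivial, transpose_sub, transpose_mul, Matrix.sub_mul,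
      Matrix.mul_sub, Matrix.mul_sub, ← Matrix.mul_assoc, h, Matrix.mul_assoc, Matrix.mul_assoc,
      ← Matrix.mul_assoc Aᵀ, h]
    abel
  exact (sub_eq_zero.mp (conjTranspose_mul_self_eq_zero.mp hgram)).symm

theorem Matrix.IsSymm.exists_weakInverse [DecidableEq n] {G : Matrix n n ℝ} (hG : G.IsSymm) :
    ∃ G' : Matrix n n ℝ, G'.IsSymm ∧ Commute G G' ∧ G * G' * G = G ∧ G' * G * G' = G' := by
  have hG : IsSelfAdjoint G := hG
  have hcont (f : ℝ → ℝ) : ContinuousOn f (spectrum ℝ G) := G.finite_real_spectrum.continuousOn f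
  refine ⟨cfc (fun x : ℝ => x⁻¹) G, cfc_predicate _ G, ?_, ?_, ?_⟩
  · simpa only [cfc_id' ℝ G] using cfc_commute_cfc (fun x : ℝ => x) (fun x : ℝ => x⁻¹) G
  · calc G * cfc (fun x : ℝ => x⁻¹) G * G = cfc (fun x : ℝ => x * x⁻¹ * x) G := by
          rw [cfc_mul _ _ G (hcont _) (hcont _), cfc_mul _ _ G (hcont _) (hcont _), cfc_id' ℝ G]
      _ = G := by simp only [mul_inv_mul_cancel, cfc_id' ℝ G]
  · calc cfc (fun x : ℝ => x⁻¹) G * G * cfc (fun x : ℝ => x⁻¹) G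
          = cfc (fun x : ℝ => x⁻¹ * x * x⁻¹) G := by
          rw [cfc_mul _ _ G (hcont _) (hcont _), cfc_mul _ _ G (hcont _) (hcont _), cfc_id' ℝ G]
      _ = cfc (fun x : ℝ => x⁻¹) G := by
        congr! 2 with x
        simpa only [inv_inv] using mul_inv_mul_cancel x⁻¹

theorem Matrix.exists_penrose (A : Matrix m n ℝ) :
    ∃ B : Matrix n m ℝ,
      A * B * A = A ∧ B * A * B = B ∧ (A * B)ᵀ = A * B ∧ (B * A)ᵀ = B * A := by
  classical
  have hgram : (Aᵀ * A).IsSymm := by rw [IsSymm, transpose_mul, transpose_transpose]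
  obtain ⟨G', hsymm, hcomm, hGG'G, hG'GG'⟩ := hgram.exists_weakInverse
  refine ⟨G' * Aᵀ, ?_, ?_, ?_, ?_⟩
  · rw [Matrix.mul_assoc, Matrix.mul_assoc]
    exact mul_eq_self_of_gram_mul_eq (by rw [← Matrix.mul_assoc, hGG'G])
  · calc G' * Aᵀ * A * (G' * Aᵀ) = G' * (Aᵀ * A) * G' * Aᵀ := by simp only [Matrix.mul_assoc]
      _ = G' * Aᵀ := by rw [hG'GG']
  · rw [transpose_mul, transpose_mul, transpose_transpose, hsymm.eq, Matrix.mul_assoc]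
  · rw [Matrix.mul_assoc, transpose_mul, hgram.eq, hsymm.eq, hcomm.eq]

theorem mul_pinv_mul (A : Matrix m n ℝ) : A * pinv A * A = A :=
  (Classical.epsilon_spec A.exists_penrose).1

theorem pinv_mul_mul_pinv (A : Matrix m n ℝ) : pinv A * A * pinv A = pinv A :=
  (Classical.epsilon_spec A.exists_penrose).2.1

theorem transpose_pinv_mul_self (A : Matrix m n ℝ) : (pinv A * A)ᵀ = pinv A * A :=
  (Classical.epsilon_spec A.exists_penrose).2.2.2

theorem mul_mul_pinv_mul_self (Y : Matrix l m ℝ) (A : Matrix m n ℝ) :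
    Y * A * (pinv A * A) = Y * A := by
  rw [Matrix.mul_assoc, ← Matrix.mul_assoc A, mul_pinv_mul]

theorem isStarProjection_pinv_mul_self (A : Matrix m n ℝ) : IsStarProjection (pinv A * A) where
  isIdempotentElem := by rw [IsIdempotentElem, ← Matrix.mul_assoc, pinv_mul_mul_pinv]
  isSelfAdjoint := by
    rw [IsSelfAdjoint, star_eq_conjTranspose, conjTranspose_eq_transpose_of_trivial,
      transpose_pinv_mul_self]

theorem pinv_mul_self_of_rank_eq_card [DecidableEq n] {A : Matrix m n ℝ}
    (h : A.rank = Fintype.card n) : pinv A * A = 1 := by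
  classical
  have hker : A * (pinv A * A - 1) = 0 := by
    rw [Matrix.mul_sub, ← Matrix.mul_assoc, mul_pinv_mul, Matrix.mul_one, sub_self]
  have hzero : (pinv A * A - 1).rank = 0 := by
    have := rank_add_rank_le_card_of_mul_eq_zero hker
    omega
  exact sub_eq_zero.mp (eq_zero_of_rank_eq_zero hzero)

end Pseudoinverse

open scoped Matrix.Norms.L2Operator

section BestRankApprox

variable {m n : Type*} [Fintype m] [Fintype n] [DecidableEq n]

theorem Matrix.isClosed_setOf_rank_le (k : ℕ) : IsClosed {B : Matrix m n ℝ | B.rank ≤ k} := by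
  let L := (toEuclideanLin (𝕜 := ℝ) (m := m) (n := n)).trans LinearMap.toContinuousLinearMap
  have hL : Continuous L := L.toLinearMap.continuous_of_finiteDimensional
  have hrank (B : Matrix m n ℝ) : (B.rank : Cardinal) =
      (L B : EuclideanSpace ℝ n →ₗ[ℝ] EuclideanSpace ℝ m).rank := by
    rw [rank_eq_finrank_range_toLin B (EuclideanSpace.basisFun m ℝ).toBasis
      (EuclideanSpace.basisFun n ℝ).toBasis, ← toEuclideanLin_eq_toLin_orthonormal,
      Module.finrank_eq_rank]
    rfl
  have hcompl : {B : Matrix m n ℝ | B.rank ≤ k}ᶜ = L ⁻¹' {f | ((k + 1 : ℕ) : Cardinal) ≤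
      (f : EuclideanSpace ℝ n →ₗ[ℝ] EuclideanSpace ℝ m).rank} := by
    ext B
    simp only [Set.mem_compl_iff, Set.mem_ofPred_eq, Set.mem_preimage, ← hrank, Nat.cast_le]
    omega
  exact isOpen_compl_iff.mp (hcompl ▸ (isOpen_setOfPred_nat_le_rank (k + 1)).preimage hL)

theorem specNorm_eq_norm (A : Matrix m n ℝ) : specNorm A = ‖A‖ := rfl

theorem exists_bestRankApprox (k : ℕ) (M : Matrix m n ℝ) :
    ∃ B : Matrix m n ℝ, B.rank ≤ k ∧
      ∀ C : Matrix m n ℝ, C.rank ≤ k → specNorm (M - B) ≤ specNorm (M - C) := by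
  obtain ⟨B, hB, hdist⟩ :=
    (isClosed_setOf_rank_le k).exists_infDist_eq_dist ⟨0, by simp [rank_zero]⟩ M
  refine ⟨B, hB, fun C hC => ?_⟩
  simp only [specNorm_eq_norm, ← dist_eq_norm]
  exact hdist ▸ Metric.infDist_le_dist_of_mem hC

theorem norm_sub_bestRankApprox_le {k : ℕ} (M : Matrix m n ℝ) {C : Matrix m n ℝ}
    (hC : C.rank ≤ k) : ‖M - bestRankApprox k M‖ ≤ ‖M - C‖ :=
  (Classical.epsilon_spec (exists_bestRankApprox k M)).2 C hC

end BestRankApprox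

section Projection

variable {m n : Type*} [Fintype m] [Fintype n] [DecidableEq n]

theorem Matrix.norm_le_one_of_transpose_mul_self_eq_one {U : Matrix m n ℝ} (h : Uᵀ * U = 1) :
    ‖U‖ ≤ 1 := by
  have hsq : ‖U‖ * ‖U‖ ≤ 1 := by
    rw [← l2_opNorm_conjTranspose_mul_self, conjTranspose_eq_transpose_of_trivial, h]
    exact IsStarProjection.norm_le _ (.one _)
  nlinarith [norm_nonneg U]

theorem Matrix.l2_opNorm_transpose [DecidableEq m] (A : Matrix m n ℝ) : ‖Aᵀ‖ = ‖A‖ := by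
  rw [← conjTranspose_eq_transpose_of_trivial, l2_opNorm_conjTranspose]

theorem Matrix.norm_mul_le_of_isStarProjection (A : Matrix m n ℝ) {P : Matrix n n ℝ}
    (hP : IsStarProjection P) : ‖A * P‖ ≤ ‖A‖ :=
  (l2_opNorm_mul A P).trans (mul_le_of_le_one_right (norm_nonneg A) (hP.norm_le P))

theorem norm_sub_bestRankApprox_mul_le {k : ℕ} {P : Matrix n n ℝ} (hP : IsStarProjection P)
    {A X Y : Matrix m n ℝ} (hX : X * P = X) (hY : Y.rank ≤ k) :
    ‖A - bestRankApprox k (A * P)‖ ≤ ‖A - X‖ + ‖A - Y‖ := by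
  set B := bestRankApprox k (A * P)
  have hsplit : A - B = (A - X) * (1 - P) + (A * P - B) := by
    rw [Matrix.sub_mul, Matrix.mul_sub, Matrix.mul_sub, hX, Matrix.mul_one, Matrix.mul_one]
    abel
  have happrox : ‖A * P - B‖ ≤ ‖A - Y‖ :=
    calc ‖A * P - B‖ ≤ ‖A * P - Y * P‖ :=
          norm_sub_bestRankApprox_le _ ((rank_mul_le_left _ _).trans hY)
      _ = ‖(A - Y) * P‖ := by rw [Matrix.sub_mul]
      _ ≤ ‖A - Y‖ := (A - Y).norm_mul_le_of_isStarProjection hP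
  rw [hsplit]
  exact (norm_add_le _ _).trans
    (add_le_add ((A - X).norm_mul_le_of_isStarProjection hP.one_sub) happrox)

end Projection

theorem Matrix.norm_mul_mul_transpose_le {k l m n : Type*} [Fintype k] [Fintype l] [Fintype m]
    [Fintype n] [DecidableEq k] [DecidableEq l] [DecidableEq n] {U : Matrix m k ℝ}
    {V : Matrix n l ℝ} (hU : Uᵀ * U = 1) (hV : Vᵀ * V = 1) (Z : Matrix k l ℝ) :
    ‖U * Z * Vᵀ‖ ≤ ‖Z‖ :=
  calc ‖U * Z * Vᵀ‖ ≤ ‖U‖ * ‖Z‖ * ‖Vᵀ‖ :=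
        (l2_opNorm_mul _ _).trans (by gcongr; exact l2_opNorm_mul _ _)
    _ ≤ 1 * ‖Z‖ * 1 := by
        gcongr
        · exact norm_le_one_of_transpose_mul_self_eq_one hU
        · exact (l2_opNorm_transpose V).trans_le (norm_le_one_of_transpose_mul_self_eq_one hV)
    _ = ‖Z‖ := by ring

theorem Matrix.sub_mul_mul_eq_of_leftInverse {k m n t : Type*} [Fintype k] [Fintype m]
    [Fintype t] [DecidableEq k]
    {U : Matrix m k ℝ} {G : Matrix k t ℝ} {R : Matrix t m ℝ} (hG : G * (R * U) = 1)
    (C : Matrix k n ℝ) (H : Matrix m n ℝ) :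
    (U * C + H) - U * G * (R * (U * C + H)) = H - U * (G * R * H) := by
  rw [Matrix.mul_add, Matrix.mul_add, ← Matrix.mul_assoc R, Matrix.mul_assoc U,
    ← Matrix.mul_assoc G, hG, Matrix.one_mul]
  simp only [Matrix.mul_assoc]
  abel

theorem lowrank_reduction_general {n m k r t : ℕ}
    (A : Matrix (Fin n) (Fin m) ℝ)
    (Uk : Matrix (Fin n) (Fin k) ℝ) (Sk : Fin k → ℝ) (Vk : Matrix (Fin m) (Fin k) ℝ)
    (Ur : Matrix (Fin n) (Fin (r - k)) ℝ) (Sr : Fin (r - k) → ℝ)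
    (Vr : Matrix (Fin m) (Fin (r - k)) ℝ)
    (hUk : Ukᵀ * Uk = 1) (hVr : Vrᵀ * Vr = 1)
    (hA : A = Uk * Matrix.diagonal Sk * Vkᵀ + Ur * Matrix.diagonal Sr * Vrᵀ)
    (R : Matrix (Fin t) (Fin n) ℝ) (hR : (R * Uk).rank = k) :
    specNorm (A - bestRankApprox k (A * pinv (R * A) * (R * A)))
      ≤ 2 * specNorm (A - Uk * Matrix.diagonal Sk * Vkᵀ)
        + specNorm (pinv (R * Uk) * R * (Ur * Matrix.diagonal Sr)) := by
  set Ak := Uk * Matrix.diagonal Sk * Vkᵀ with hAk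
  set Z := pinv (R * Uk) * R * (Ur * Matrix.diagonal Sr)
  have hleft : pinv (R * Uk) * (R * Uk) = 1 :=
    pinv_mul_self_of_rank_eq_card (by rwa [Fintype.card_fin])
  have htail : A - Ak = Ur * Matrix.diagonal Sr * Vrᵀ := by rw [hA]; abel
  have hsketch : A - Uk * pinv (R * Uk) * (R * A) = (A - Ak) - Uk * Z * Vrᵀ := by
    rw [htail, hA, hAk, Matrix.mul_assoc Uk (Matrix.diagonal Sk),
      sub_mul_mul_eq_of_leftInverse hleft]
    simp only [Z, Matrix.mul_assoc]
  rw [specNorm_eq_norm, specNorm_eq_norm, specNorm_eq_norm, Matrix.mul_assoc A]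
  calc ‖A - bestRankApprox k (A * (pinv (R * A) * (R * A)))‖
      ≤ ‖A - Uk * pinv (R * Uk) * (R * A)‖ + ‖A - Ak‖ :=
        norm_sub_bestRankApprox_mul_le (isStarProjection_pinv_mul_self _)
          (mul_mul_pinv_mul_self _ _)
          ((rank_mul_le_left _ _).trans ((rank_mul_le_left _ _).trans (rank_le_width Uk)))
    _ ≤ (‖A - Ak‖ + ‖Z‖) + ‖A - Ak‖ := by
        gcongr
        rw [hsketch]
        exact (norm_sub_le _ _).trans (by gcongr; exact norm_mul_mul_transpose_le hUk hVr Z)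
    _ = 2 * ‖A - Ak‖ + ‖Z‖ := by ring

/-- With `A = U_k Σ_k V_kᵀ + U_{r−k} Σ_{r−k} V_{r−k}ᵀ` the SVD splitting of a
rank-`r` matrix into top-`k` part `A_k` and tail, `H_k = U_{r−k}Σ_{r−k}`, and `R` any
`t×n` matrix with `RU_k` of full column rank,
`‖A − P_{(RA),k}(A)‖ ≤ 2‖A − A_k‖ + ‖(RU_k)⁺ R H_k‖`. -/
theorem lowrank_reduction {n m k r t : ℕ} (hk : k ≤ r)
    (A : Matrix (Fin n) (Fin m) ℝ)
    (Uk : Matrix (Fin n) (Fin k) ℝ) (Sk : Fin k → ℝ) (Vk : Matrix (Fin m) (Fin k) ℝ)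
    (Ur : Matrix (Fin n) (Fin (r - k)) ℝ) (Sr : Fin (r - k) → ℝ)
    (Vr : Matrix (Fin m) (Fin (r - k)) ℝ)
    (hUk : Ukᵀ * Uk = 1) (hUr : Urᵀ * Ur = 1) (hUkr : Ukᵀ * Ur = 0)
    (hVk : Vkᵀ * Vk = 1) (hVr : Vrᵀ * Vr = 1) (hVkr : Vkᵀ * Vr = 0)
    (hSk : ∀ i, 0 ≤ Sk i) (hSr : ∀ j, 0 ≤ Sr j) (horder : ∀ i j, Sr j ≤ Sk i)
    (hA : A = Uk * Matrix.diagonal Sk * Vkᵀ + Ur * Matrix.diagonal Sr * Vrᵀ)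
    (hrank : A.rank = r)
    (R : Matrix (Fin t) (Fin n) ℝ) (hR : (R * Uk).rank = k) :
    specNorm (A - bestRankApprox k (A * pinv (R * A) * (R * A)))
      ≤ 2 * specNorm (A - Uk * Matrix.diagonal Sk * Vkᵀ)
        + specNorm (pinv (R * Uk) * R * (Ur * Matrix.diagonal Sr)) :=
  lowrank_reduction_general A Uk Sk Vk Ur Sr Vr hUk hVr hA R hR
end
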